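/- For each k ≥ 1 and n ≥ 0, the evacuation map ev is a bijection from the set of standard k-ribbon Fibonacci tableaux with entries 1, ..., n onto the set of k-ribbon Fibonacci path tableaux with entries 1, ..., n; moreover, ev(P) has the same k-ribbon Fibonacci shape as P. -/

import Mathlib

namespace KRF

/-- A letter of the alphabet `{1_1, …, 1_k, 2}`:  `one j` stands for the letter `1_j`
(with `1 ≤ j ≤ k` for genuine letters), and `two` stands for the letter `2`. -/
inductive Letter (k : ℕ) : Type where
  | one : ℕ → Letter k
  | two : Letter k
deriving DecidableEq

/-- A word over the alphabet `{1_1, …, 1_k, 2}`, listed from the leftmost letter to the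
rightmost letter. -/
abbrev Word (k : ℕ) := List (Letter k)

/-- The contribution of a letter to the rank: each `1_j` counts `1` and each `2` counts `2`. -/
def Letter.rank {k : ℕ} : Letter k → ℕ
  | .one _ => 1
  | .two => 2

/-- The rank of a word: the sum of its letters. -/
def Word.rank {k : ℕ} (w : Word k) : ℕ := (w.map Letter.rank).sum

/-- The letter `1_j` is valid when `1 ≤ j ≤ k`. -/
def Letter.Valid (k : ℕ) : Letter k → Prop
  | .one j => 1 ≤ j ∧ j ≤ k
  | .two => True

/-- A genuine word of the Fibonacci poset `Z(k)`: all of its letters are valid. -/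
def Word.Valid (k : ℕ) (w : Word k) : Prop := ∀ l ∈ w, l.Valid k

/-- The cover relation of the Fibonacci poset `Z(k)`:  `z` is covered by `w` iff `z` is
obtained from `w` either by changing a `2` into some `1_j` when all letters to the left of
that `2` are `2`'s, or by deleting the leftmost letter of the form `1_j`. -/
def ZCovers (k : ℕ) (z w : Word k) : Prop :=
  (∃ (p s : Word k) (j : ℕ), (∀ l ∈ p, l = Letter.two) ∧ 1 ≤ j ∧ j ≤ k ∧
      w = p ++ Letter.two :: s ∧ z = p ++ Letter.one j :: s) ∨
  (∃ (p s : Word k) (j : ℕ), (∀ l ∈ p, l = Letter.two) ∧ 1 ≤ j ∧ j ≤ k ∧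
      w = p ++ Letter.one j :: s ∧ z = p ++ s)

/-- `c 0 ⋖ c 1 ⋖ ⋯ ⋖ c n` is a saturated chain in `Z(k)` starting at the empty word. -/
def IsZChain (k n : ℕ) (c : ℕ → Word k) : Prop :=
  c 0 = [] ∧ ∀ i, i < n → ZCovers k (c i) (c (i + 1))

end KRF
namespace KRF

/-- A column of a (tiled and filled) `k`-ribbon Fibonacci tableau.
`single h v` is a column of height 1 (shape letter `1_h`) tiled by one `k`-ribbon of
height `h` filled with the value `v`.
`double ht hb vt vb` is a column of height 2 (shape letter `2`) tiled by a `k`-ribbon of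
height `ht` filled with `vt` stacked on top of a `k`-ribbon of height `hb` (always
`hb = k + 1 - ht` for genuine tableaux) filled with `vb`. -/
inductive Col (k : ℕ) : Type where
  | single : ℕ → ℕ → Col k
  | double : ℕ → ℕ → ℕ → ℕ → Col k
deriving DecidableEq

/-- A (tiled, filled) `k`-ribbon Fibonacci tableau: its list of columns, from the leftmost
column to the rightmost one. -/
abbrev Tab (k : ℕ) := List (Col k)

/-- The shape letter of a column. -/
def Col.shape {k : ℕ} : Col k → Letter k
  | .single h _ => Letter.one h
  | .double _ _ _ _ => Letter.two

/-- The `k`-ribbon Fibonacci shape (a word) underlying a tableau. -/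
def Tab.shape {k : ℕ} (T : Tab k) : Word k := T.map Col.shape

/-- The value in the bottom `k`-ribbon of a column. -/
def Col.bottomVal {k : ℕ} : Col k → ℕ
  | .single _ v => v
  | .double _ _ _ vb => vb

/-- The heights occurring in a column are genuine ribbon heights: between `1` and `k`,
and in a column of height 2 the two heights sum to `k + 1`. -/
def Col.HeightsValid (k : ℕ) : Col k → Prop
  | .single h _ => 1 ≤ h ∧ h ≤ k
  | .double ht hb _ _ => 1 ≤ ht ∧ ht ≤ k ∧ hb = k + 1 - ht

/-- The list of all entries of a tableau (one for each `k`-ribbon). -/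
def Tab.entries {k : ℕ} (T : Tab k) : List ℕ :=
  (T.map fun c => match c with
    | Col.single _ v => [v]
    | Col.double _ _ vt vb => [vt, vb]).flatten

/-- The list of the bottom-ribbon values of the columns of a tableau. -/
def Tab.bottoms {k : ℕ} (T : Tab k) : List ℕ := T.map Col.bottomVal

/-- `T` is a standard `k`-ribbon Fibonacci tableau with entries `1, …, n`:
heights are valid, the entries are exactly `1, …, n`,  and the tableau can be built by
placing `n, n-1, …, 1` in order, each new `k`-ribbon being either appended (as a new
rightmost height-1 column) to the shape formed by the `k`-ribbons containing larger
entries, or stacked on top of a single such `k`-ribbon.  Equivalently (and this is how we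
formalize it): the bottom entries strictly decrease from left to right (in particular the
`k`-ribbon containing the leftmost square of the bottom row contains `n`), and in each
column of height 2 the top entry is smaller than the bottom entry. -/
def IsStandardTab (k n : ℕ) (T : Tab k) : Prop :=
  (∀ c ∈ T, Col.HeightsValid k c) ∧
  (Tab.entries T).Perm (List.range' 1 n) ∧
  List.Chain' (fun a b => b < a) (Tab.bottoms T) ∧
  (∀ c ∈ T, ∀ ht hb vt vb, c = Col.double ht hb vt vb → vt < vb)

/-- Updating a (partial) path tableau along one cover step `z ⋖ w` of `Z(k)`, placing the
value `i` in the `k` new squares of `w` relative to `z`:  if `w` is obtained from `z` by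
inserting a letter `1_j` after the prefix of `2`'s, a new height-1 column with a single
ribbon of height `j` filled with `i` is created there; if `w` is obtained from `z` by
changing the letter `1_h` just after the prefix of `2`'s into a `2`, the `k` new squares
of that column form a `k`-ribbon of height `k + 1 - h` filled with `i`, stacked on top of
the already present `k`-ribbon of height `h`. -/
def updateTab (k : ℕ) (i : ℕ) : Word k → Word k → Tab k → Tab k
  | Letter.two :: z', Letter.two :: w', c :: T => c :: updateTab k i z' w' T
  | Letter.one h :: _, Letter.two :: _, Col.single _ v :: T =>
      Col.double (k + 1 - h) h i v :: T
  | z, Letter.one j :: w', T => if z = w' then Col.single j i :: T else T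
  | _, _, T => T

/-- The `k`-ribbon Fibonacci path tableau determined by a saturated chain in `Z(k)`:
for each `i = 1, …, n` the value `i` is placed in the `k` new squares of `c i` relative
to `c (i-1)`. -/
def chainTab (k : ℕ) (c : ℕ → Word k) : ℕ → Tab k
  | 0 => []
  | m + 1 => updateTab k (m + 1) (c m) (c (m + 1)) (chainTab k c m)

/-- `T` is a `k`-ribbon Fibonacci path tableau with entries `1, …, n`: it is obtained
from some saturated chain `∅ = c 0 ⋖ c 1 ⋖ ⋯ ⋖ c n` in `Z(k)` by placing `i`'s in the
`k` new squares created at the `i`-th step. -/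
def IsPathTab (k n : ℕ) (T : Tab k) : Prop :=
  ∃ c : ℕ → Word k, IsZChain k n c ∧ T = chainTab k c n

end KRF
namespace KRF

/-- The bubbling phase of one evacuation step.  The current column has an empty bottom
`k`-ribbon, below a `k`-ribbon of height `ht` filled with `a` (`hb` is the height of the
empty ribbon); `rest` is the list of columns strictly to its right.  As long as there is a
ribbon above the empty one, `a` is compared with the entry `b` of the bottom ribbon of the
next column: if `a > b` the ribbon containing `a` drops to the bottom (keeping its height)
and the empty ribbon moves to the top of the column, where it is removed; if `a < b` the
empty ribbon is filled with `b` and the empty ribbon moves to the next column.  The result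
is the position (index relative to the current column, height, whether it was a top
ribbon) of the finally removed empty `k`-ribbon, together with the updated suffix of the
tableau (with the empty ribbon removed and the columns slid left). -/
def evacLoop {k : ℕ} (ht hb a : ℕ) : Tab k → (ℕ × ℕ × Bool) × Tab k
  | [] => ((0, hb, true), [Col.single ht a])
  | c :: rest =>
    if Col.bottomVal c < a then ((0, hb, true), Col.single ht a :: c :: rest)
    else
      match c with
      | Col.single h2 v => ((1, h2, false), Col.double ht hb a v :: rest)
      | Col.double ht' hb' vt' vb' =>
          let r := evacLoop ht' hb' vt' rest
          ((r.1.1 + 1, r.1.2.1, r.1.2.2), Col.double ht hb a vb' :: r.2)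

/-- One evacuation step: erase the entry of the bottom `k`-ribbon of the leftmost column
(the largest entry) and bubble the empty ribbon until it can be removed.  Returns the
position (column index, height, whether it is a top ribbon) of the removed empty
`k`-ribbon together with the remaining (slid) tableau. -/
def evacStep (k : ℕ) : Tab k → (ℕ × ℕ × Bool) × Tab k
  | [] => ((0, 0, false), [])
  | Col.single h _ :: rest => ((0, h, false), rest)
  | Col.double ht hb vt _ :: rest => evacLoop ht hb vt rest

/-- Place the value `v` in a `k`-ribbon of height `h` at the column with index `idx`:
if `isTop = false` a new height-1 column is inserted at index `idx`; if `isTop = true`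
the ribbon is put on top of the (single) ribbon of the column at index `idx`. -/
def placeAt {k : ℕ} : ℕ → ℕ → Bool → ℕ → Tab k → Tab k
  | 0, h, false, v, T => Col.single h v :: T
  | 0, h, true, v, Col.single h0 vb :: rest => Col.double h h0 v vb :: rest
  | 0, _, true, _, T => T
  | idx + 1, h, tp, v, c :: rest => c :: placeAt idx h tp v rest
  | _ + 1, _, _, _, [] => []

/-- The number of `k`-ribbons of a tableau. -/
def Tab.ribbonCount {k : ℕ} (T : Tab k) : ℕ :=
  (T.map fun c => match c with
    | Col.single _ _ => 1
    | Col.double _ _ _ _ => 2).sum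

/-- The evacuation recursion: each step removes the largest remaining entry, bubbles the
empty ribbon to its final position, and records that entry at that position in the
evacuation tableau (which has the same shape as the original tableau).  Each step removes
exactly one `k`-ribbon, so `Tab.ribbonCount T` steps suffice. -/
def evacAux (k : ℕ) : ℕ → Tab k → Tab k
  | 0, _ => []
  | _ + 1, [] => []
  | fuel + 1, c :: rest =>
      let s := evacStep k (c :: rest)
      placeAt s.1.1 s.1.2.1 s.1.2.2 (Col.bottomVal c) (evacAux k fuel s.2)

/-- The evacuation `ev(P)` of a (standard) `k`-ribbon Fibonacci tableau. -/
def evac (k : ℕ) (T : Tab k) : Tab k := evacAux k (Tab.ribbonCount T) T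

end KRF

/-!
A standard tableau with entries `1, …, n + 1` is obtained from one with entries `1, …, n`
by inserting `n + 1` at the bottom of the first column and pushing each displaced bottom entry
into the next column, until the new ribbon is dropped at a position where a ribbon can be
added to the shape (`unevacStep`); the first step of evacuation undoes exactly this. The
positions where a ribbon can be added to a shape are precisely the covers of that shape in
`Z(k)`, so a path tableau with entries `1, …, n + 1` is likewise a path tableau with entries
`1, …, n` together with such a position, holding `n + 1`. Evacuation sends the first
decomposition to the second with the same position, and induction on `n` gives shape
preservation, that `ev(P)` is a path tableau, and bijectivity.
-/

namespace KRF

variable {k : ℕ}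

@[simp] lemma entries_nil : Tab.entries ([] : Tab k) = [] := rfl

@[simp] lemma entries_single_cons (h v : ℕ) (T : Tab k) :
    Tab.entries (.single h v :: T) = v :: Tab.entries T := rfl

@[simp] lemma entries_double_cons (ht hb vt vb : ℕ) (T : Tab k) :
    Tab.entries (.double ht hb vt vb :: T) = vt :: vb :: Tab.entries T := rfl

@[simp] lemma shape_nil : Tab.shape ([] : Tab k) = [] := rfl

@[simp] lemma shape_cons (c : Col k) (T : Tab k) :
    Tab.shape (c :: T) = c.shape :: Tab.shape T := rfl

@[simp] lemma bottoms_nil : Tab.bottoms ([] : Tab k) = [] := rfl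

@[simp] lemma bottoms_cons (c : Col k) (T : Tab k) :
    Tab.bottoms (c :: T) = c.bottomVal :: Tab.bottoms T := rfl

lemma ribbonCount_eq_length_entries (T : Tab k) :
    Tab.ribbonCount T = (Tab.entries T).length := by
  induction T with
  | nil => rfl
  | cons c T ih => cases c <;> simp_all [Tab.ribbonCount] <;> omega

lemma bottomVal_mem_entries_cons (c : Col k) (T : Tab k) :
    c.bottomVal ∈ Tab.entries (c :: T) := by
  cases c <;> simp [Col.bottomVal]

def Col.TopLtBottom : Col k → Prop
  | .single _ _ => True
  | .double _ _ vt vb => vt < vb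

-- The conditions of `IsStandardTab` other than the entries being `1, …, n`, in a form that
-- passes to every final segment of columns.
def IsDecreasing (k : ℕ) : Tab k → Prop
  | [] => True
  | c :: T => c.HeightsValid k ∧ c.TopLtBottom ∧ (∀ x ∈ Tab.entries T, x < c.bottomVal) ∧
      IsDecreasing k T

lemma IsDecreasing.le_bottomVal {c : Col k} {T : Tab k} (hT : IsDecreasing k (c :: T)) :
    ∀ x ∈ Tab.entries (c :: T), x ≤ c.bottomVal := by
  obtain ⟨-, htop, hlt, -⟩ := hT
  cases c <;> simp only [Col.TopLtBottom] at htop <;> simp [Col.bottomVal] at hlt ⊢ <;>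
    grind

lemma isDecreasing_iff {T : Tab k} : IsDecreasing k T ↔
    (∀ c ∈ T, c.HeightsValid k) ∧ List.IsChain (fun a b => b < a) (Tab.bottoms T) ∧
      ∀ c ∈ T, ∀ ht hb vt vb, c = .double ht hb vt vb → vt < vb := by
  induction T with
  | nil => simp [IsDecreasing]
  | cons c T ih =>
    have htop : c.TopLtBottom ↔ ∀ ht hb vt vb, c = .double ht hb vt vb → vt < vb := by
      cases c with
      | single => simp [Col.TopLtBottom]
      | double => exact ⟨by rintro h _ _ _ _ ⟨⟩; exact h, fun h => h _ _ _ _ rfl⟩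
    have hhead (hT : IsDecreasing k T) : (∀ x ∈ Tab.entries T, x < c.bottomVal) ↔
        ∀ y ∈ (Tab.bottoms T).head?, y < c.bottomVal := by
      cases T with
      | nil => simp
      | cons d T =>
        simp only [bottoms_cons, List.head?_cons, Option.mem_def, Option.some.injEq, forall_eq']
        exact ⟨fun h => h _ (bottomVal_mem_entries_cons d T),
          fun h x hx => (hT.le_bottomVal x hx).trans_lt h⟩
    simp only [IsDecreasing, List.forall_mem_cons, bottoms_cons, List.isChain_cons, htop]
    constructor
    · rintro ⟨hc, htop, hlt, hT⟩
      exact ⟨⟨hc, (ih.1 hT).1⟩, ⟨(hhead hT).1 hlt, (ih.1 hT).2.1⟩, htop, (ih.1 hT).2.2⟩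
    · rintro ⟨⟨hc, hcs⟩, ⟨hlt, hch⟩, htop, htops⟩
      have hT := ih.2 ⟨hcs, hch, htops⟩
      exact ⟨hc, htop, (hhead hT).2 hlt, hT⟩

-- The positions `(idx, h, tp)`, in the format returned by `evacStep`, at which `placeAt` adds
-- a ribbon of height `h` to a tableau of shape `w`.
def ValidPos (k : ℕ) : ℕ → ℕ → Bool → Word k → Prop
  | 0, h, false, _ => 1 ≤ h ∧ h ≤ k
  | 0, h, true, .one j :: _ => 1 ≤ j ∧ j ≤ k ∧ h = k + 1 - j
  | idx + 1, h, tp, .two :: w => ValidPos k idx h tp w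
  | _, _, _, _ => False

def addAt : ℕ → ℕ → Bool → Word k → Word k
  | 0, h, false, w => .one h :: w
  | 0, _, true, _ :: w => .two :: w
  | idx + 1, h, tp, l :: w => l :: addAt idx h tp w
  | _, _, _, w => w

def unevacStep (k N : ℕ) : ℕ → ℕ → Bool → Tab k → Tab k
  | 0, h, false, T => .single h N :: T
  | 0, _, true, .single s a :: T => .double s (k + 1 - s) a N :: T
  | idx + 1, h, tp, .double ht hb vt vb :: T => .double ht hb vt N :: unevacStep k vb idx h tp T
  | _, _, _, T => T

lemma unevacStep_eq_cons (N : ℕ) {idx h : ℕ} {tp : Bool} {T : Tab k}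
    (hv : ValidPos k idx h tp (Tab.shape T)) :
    ∃ c L, unevacStep k N idx h tp T = c :: L ∧ c.bottomVal = N := by
  rcases idx with _ | idx <;> cases tp <;> rcases T with _ | ⟨_ | _, T⟩ <;>
    simp_all [ValidPos, unevacStep, Col.shape, Col.bottomVal]

lemma entries_unevacStep (N : ℕ) {idx h : ℕ} {tp : Bool} {T : Tab k}
    (hv : ValidPos k idx h tp (Tab.shape T)) :
    (Tab.entries (unevacStep k N idx h tp T)).Perm (N :: Tab.entries T) := by
  induction idx generalizing N T with
  | zero =>
    cases tp <;> rcases T with _ | ⟨_ | _, T⟩ <;>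
      simp_all [ValidPos, unevacStep, Col.shape, List.Perm.swap]
  | succ idx ih =>
    rcases T with _ | ⟨_ | ⟨ht, hb, vt, vb⟩, T⟩ <;> simp_all [ValidPos, unevacStep, Col.shape]
    exact (((ih vb hv).cons N).cons vt).trans (.swap ..)

lemma shape_unevacStep (N : ℕ) {idx h : ℕ} {tp : Bool} {T : Tab k}
    (hv : ValidPos k idx h tp (Tab.shape T)) :
    Tab.shape (unevacStep k N idx h tp T) = addAt idx h tp (Tab.shape T) := by
  induction idx generalizing N T with
  | zero =>
    cases tp <;> rcases T with _ | ⟨_ | _, T⟩ <;> simp_all [ValidPos, unevacStep, Col.shape, addAt]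
  | succ idx ih =>
    rcases T with _ | ⟨_ | _, T⟩ <;> simp_all [ValidPos, unevacStep, Col.shape, addAt]

lemma IsDecreasing.unevacStep {N idx h : ℕ} {tp : Bool} {T : Tab k} (hT : IsDecreasing k T)
    (hN : ∀ x ∈ Tab.entries T, x < N) (hv : ValidPos k idx h tp (Tab.shape T)) :
    IsDecreasing k (unevacStep k N idx h tp T) := by
  induction idx generalizing N T with
  | zero =>
    cases tp <;> rcases T with _ | ⟨_ | _, T⟩ <;>
      simp_all [ValidPos, KRF.unevacStep, Col.shape, IsDecreasing, Col.HeightsValid,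
        Col.TopLtBottom, Col.bottomVal]
  | succ idx ih =>
    rcases T with _ | ⟨_ | ⟨ht, hb, vt, vb⟩, T⟩ <;>
      simp only [ValidPos, KRF.unevacStep, Col.shape, shape_nil, shape_cons] at hv ⊢
    obtain ⟨hc, htop, hlt, hT⟩ := hT
    simp only [entries_double_cons, List.mem_cons, forall_eq_or_imp] at hN
    refine ⟨hc, hN.1, fun x hx => ?_, ih hT hlt hv⟩
    rcases List.mem_cons.1 ((entries_unevacStep vb hv).mem_iff.1 hx) with rfl | hx
    exacts [hN.2.1, (hlt x hx).trans hN.2.1]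

lemma evacLoop_of_forall_lt (ht hb : ℕ) {v : ℕ} {T : Tab k} (hT : ∀ x ∈ Tab.entries T, x < v) :
    evacLoop ht hb v T = ((0, hb, true), .single ht v :: T) := by
  rcases T with _ | ⟨c, T⟩
  · rfl
  · simp [evacLoop, hT _ (bottomVal_mem_entries_cons c T)]

lemma evacLoop_unevacStep (ht hb : ℕ) {a b idx h : ℕ} {tp : Bool} {T : Tab k}
    (hab : a < b) (hT : IsDecreasing k T) (hv : ValidPos k idx h tp (Tab.shape T)) :
    evacLoop ht hb a (unevacStep k b idx h tp T) =
      ((idx + 1, h, tp), .double ht hb a b :: T) := by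
  induction idx generalizing a b ht hb T with
  | zero =>
    cases tp <;> rcases T with _ | ⟨_ | _, T⟩ <;>
      simp_all [ValidPos, unevacStep, evacLoop, Col.shape, Col.bottomVal, IsDecreasing,
        evacLoop_of_forall_lt, hab.not_gt]
  | succ idx ih =>
    rcases T with _ | ⟨_ | ⟨ht', hb', t', b'⟩, T⟩ <;>
      simp only [ValidPos, Col.shape, shape_nil, shape_cons] at hv
    obtain ⟨-, htb, -, hT⟩ := hT
    simp [unevacStep, evacLoop, Col.bottomVal, hab.not_gt, ih ht' hb' htb hT hv]

lemma evacStep_unevacStep (N : ℕ) {idx h : ℕ} {tp : Bool} {T : Tab k} (hT : IsDecreasing k T)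
    (hv : ValidPos k idx h tp (Tab.shape T)) :
    evacStep k (unevacStep k N idx h tp T) = ((idx, h, tp), T) := by
  match idx, tp, T with
  | 0, false, _ => rfl
  | 0, true, .single s v :: T =>
    obtain ⟨-, -, rfl⟩ := hv
    exact evacLoop_of_forall_lt s _ hT.2.2.1
  | _ + 1, _, .double ht hb _ _ :: _ => exact evacLoop_unevacStep ht hb hT.2.1 hT.2.2.2 hv
  | 0, true, [] | 0, true, .double .. :: _ | _ + 1, _, [] | _ + 1, _, .single .. :: _ =>
    simp [ValidPos, Col.shape] at hv

lemma evac_cons_of_evacStep {c : Col k} {T T₀ : Tab k} {idx h : ℕ} {tp : Bool}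
    (hstep : evacStep k (c :: T) = ((idx, h, tp), T₀))
    (hcount : Tab.ribbonCount (c :: T) = Tab.ribbonCount T₀ + 1) :
    evac k (c :: T) = placeAt idx h tp c.bottomVal (evac k T₀) := by
  rw [evac, hcount]
  simp only [evacAux, hstep]
  rfl

lemma evac_unevacStep (N : ℕ) {idx h : ℕ} {tp : Bool} {T : Tab k} (hT : IsDecreasing k T)
    (hv : ValidPos k idx h tp (Tab.shape T)) :
    evac k (unevacStep k N idx h tp T) = placeAt idx h tp N (evac k T) := by
  obtain ⟨c, L, hcL, rfl⟩ := unevacStep_eq_cons N hv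
  rw [hcL]
  refine evac_cons_of_evacStep (hcL ▸ evacStep_unevacStep _ hT hv) ?_
  rw [← hcL, ribbonCount_eq_length_entries, ribbonCount_eq_length_entries,
    (entries_unevacStep _ hv).length_eq, List.length_cons]

lemma IsDecreasing.exists_eq_unevacStep {T : Tab k} (hT : IsDecreasing k T)
    (hnd : (Tab.entries T).Nodup) {c : Col k} {L : Tab k} (hcL : T = c :: L) :
    ∃ idx h tp T₀, ValidPos k idx h tp (Tab.shape T₀) ∧ IsDecreasing k T₀ ∧
      T = KRF.unevacStep k c.bottomVal idx h tp T₀ := by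
  induction T generalizing c L with
  | nil => cases hcL
  | cons c L ih =>
    obtain ⟨rfl, rfl⟩ := List.cons.inj hcL
    obtain ⟨hc, htop, hlt, hT⟩ := hT
    cases c with
    | single h v => exact ⟨0, h, false, L, hc, hT, rfl⟩
    | double ht hb vt vb =>
      obtain ⟨hht, hhk, rfl⟩ := hc
      -- `evacLoop` stops in the first column exactly when `vt` beats every entry to its right.
      by_cases hstop : ∀ x ∈ Tab.entries L, x < vt
      · exact ⟨0, k + 1 - ht, true, .single ht vt :: L, ⟨hht, hhk, rfl⟩,
          ⟨⟨hht, hhk⟩, trivial, hstop, hT⟩, rfl⟩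
      rcases L with _ | ⟨d, L⟩
      · simp at hstop
      simp only [entries_double_cons, List.nodup_cons, List.mem_cons, not_or] at hnd
      have hvt : vt < d.bottomVal := by
        obtain ⟨x, hx, hvx⟩ : ∃ x ∈ Tab.entries (d :: L), vt ≤ x := by simpa using hstop
        have hne : vt ≠ x := fun h => hnd.1.2 (h ▸ hx)
        exact (lt_of_le_of_ne hvx hne).trans_le (hT.le_bottomVal x hx)
      obtain ⟨idx, h, tp, T₀, hv, hT₀, heq⟩ := ih hT hnd.2.2 rfl
      have hperm := heq ▸ entries_unevacStep d.bottomVal hv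
      have hlt₀ : ∀ x ∈ Tab.entries T₀, x < d.bottomVal := fun x hx =>
        lt_of_le_of_ne (hT.le_bottomVal x (hperm.mem_iff.2 (List.mem_cons_of_mem _ hx)))
          fun hxd => (List.nodup_cons.1 (hperm.nodup_iff.1 hnd.2.2)).1 (hxd ▸ hx)
      exact ⟨idx + 1, h, tp, .double ht (k + 1 - ht) vt d.bottomVal :: T₀, hv,
        ⟨⟨hht, hhk, rfl⟩, hvt, hlt₀, hT₀⟩, by rw [KRF.unevacStep, ← heq]; rfl⟩

lemma shape_placeAt (v : ℕ) {idx h : ℕ} {tp : Bool} {P : Tab k}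
    (hv : ValidPos k idx h tp (Tab.shape P)) :
    Tab.shape (placeAt idx h tp v P) = addAt idx h tp (Tab.shape P) := by
  induction idx generalizing P with
  | zero =>
    cases tp <;> rcases P with _ | ⟨_ | _, P⟩ <;> simp_all [ValidPos, placeAt, Col.shape, addAt]
  | succ idx ih =>
    rcases P with _ | ⟨_ | _, P⟩ <;> simp_all [ValidPos, placeAt, Col.shape, addAt]

lemma entries_placeAt (v : ℕ) {idx h : ℕ} {tp : Bool} {P : Tab k}
    (hv : ValidPos k idx h tp (Tab.shape P)) :
    (Tab.entries (placeAt idx h tp v P)).Perm (v :: Tab.entries P) := by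
  induction idx generalizing P with
  | zero => cases tp <;> rcases P with _ | ⟨_ | _, P⟩ <;> simp_all [ValidPos, placeAt, Col.shape]
  | succ idx ih =>
    rcases P with _ | ⟨_ | ⟨ht, hb, vt, vb⟩, P⟩ <;> simp_all [ValidPos, placeAt, Col.shape]
    exact (((ih hv).cons vb).cons vt).trans (((List.Perm.swap ..).cons vt).trans (.swap ..))

def removeVal (k v : ℕ) : Tab k → (ℕ × ℕ × Bool) × Tab k
  | [] => ((0, 0, false), [])
  | .single h x :: T =>
      if x = v then ((0, h, false), T)
      else let r := removeVal k v T; ((r.1.1 + 1, r.1.2), .single h x :: r.2)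
  | .double ht hb vt vb :: T =>
      if vt = v then ((0, ht, true), .single hb vb :: T)
      else let r := removeVal k v T; ((r.1.1 + 1, r.1.2), .double ht hb vt vb :: r.2)

lemma removeVal_placeAt {v idx h : ℕ} {tp : Bool} {P : Tab k}
    (hv : ValidPos k idx h tp (Tab.shape P)) (hvP : v ∉ Tab.entries P) :
    removeVal k v (placeAt idx h tp v P) = ((idx, h, tp), P) := by
  induction idx generalizing P with
  | zero =>
    cases tp <;> rcases P with _ | ⟨_ | _, P⟩ <;>
      simp_all [ValidPos, placeAt, removeVal, Col.shape]
  | succ idx ih =>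
    rcases P with _ | ⟨_ | ⟨ht, hb, vt, vb⟩, P⟩ <;>
      simp_all [ValidPos, placeAt, removeVal, Col.shape]
    grind

lemma updateTab_addAt (i : ℕ) {idx h : ℕ} {tp : Bool} {P : Tab k}
    (hv : ValidPos k idx h tp (Tab.shape P)) :
    updateTab k i (Tab.shape P) (addAt idx h tp (Tab.shape P)) P = placeAt idx h tp i P := by
  induction idx generalizing P with
  | zero =>
    cases tp
    · rcases P with _ | ⟨_ | _, P⟩ <;> simp [updateTab, addAt, placeAt, Col.shape]
    · rcases P with _ | ⟨_ | _, P⟩ <;> simp_all [ValidPos, updateTab, addAt, placeAt, Col.shape]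
  | succ idx ih =>
    rcases P with _ | ⟨_ | _, P⟩ <;> simp_all [ValidPos, updateTab, addAt, placeAt, Col.shape]

lemma ZCovers.two_cons {z w : Word k} (hzw : ZCovers k z w) :
    ZCovers k (.two :: z) (.two :: w) := by
  rcases hzw with ⟨p, s, j, hp, hj, hjk, rfl, rfl⟩ | ⟨p, s, j, hp, hj, hjk, rfl, rfl⟩
  · exact .inl ⟨.two :: p, s, j, by simpa using hp, hj, hjk, rfl, rfl⟩
  · exact .inr ⟨.two :: p, s, j, by simpa using hp, hj, hjk, rfl, rfl⟩

lemma validPos_and_addAt_twos_append {p w : Word k} (hp : ∀ l ∈ p, l = .two) {h : ℕ} {tp : Bool}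
    (hv : ValidPos k 0 h tp w) :
    ValidPos k p.length h tp (p ++ w) ∧ addAt p.length h tp (p ++ w) = p ++ addAt 0 h tp w := by
  induction p with
  | nil => exact ⟨hv, rfl⟩
  | cons l p ih =>
    obtain rfl : l = .two := hp l (List.mem_cons_self ..)
    obtain ⟨hv', heq⟩ := ih fun l hl => hp l (List.mem_cons_of_mem _ hl)
    exact ⟨hv', by simp [addAt, heq]⟩

lemma zCovers_iff_exists_validPos {z w : Word k} :
    ZCovers k z w ↔ ∃ idx h tp, ValidPos k idx h tp z ∧ w = addAt idx h tp z := by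
  constructor
  · rintro (⟨p, s, j, hp, hj, hjk, rfl, rfl⟩ | ⟨p, s, j, hp, hj, hjk, rfl, rfl⟩)
    · obtain ⟨hv, heq⟩ :=
        validPos_and_addAt_twos_append (w := .one j :: s) (tp := true) hp ⟨hj, hjk, rfl⟩
      exact ⟨_, _, _, hv, heq.symm⟩
    · obtain ⟨hv, heq⟩ :=
        validPos_and_addAt_twos_append (w := s) (h := j) (tp := false) hp ⟨hj, hjk⟩
      exact ⟨_, _, _, hv, heq.symm⟩
  · rintro ⟨idx, h, tp, hv, rfl⟩
    induction idx generalizing z with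
    | zero =>
      cases tp
      · exact .inr ⟨[], z, h, by simp, hv.1, hv.2, rfl, rfl⟩
      · rcases z with _ | ⟨j | _, s⟩ <;> simp only [ValidPos] at hv
        exact .inl ⟨[], s, j, by simp, hv.1, hv.2.1, rfl, rfl⟩
    | succ idx ih =>
      rcases z with _ | ⟨_ | _, z⟩ <;> simp only [ValidPos] at hv
      exact (ih hv).two_cons

lemma perm_range'_succ (n : ℕ) : ((n + 1) :: List.range' 1 n).Perm (List.range' 1 (n + 1)) := by
  rw [List.range'_concat, Nat.one_mul, Nat.add_comm]
  exact (List.perm_append_singleton _ _).symm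

lemma shape_updateTab (i : ℕ) {z w : Word k} {P : Tab k} (hzw : ZCovers k z w)
    (hP : Tab.shape P = z) : Tab.shape (updateTab k i z w P) = w := by
  obtain ⟨idx, h, tp, hv, rfl⟩ := zCovers_iff_exists_validPos.1 hzw
  subst hP
  rw [updateTab_addAt i hv, shape_placeAt i hv]

lemma IsZChain.shape_chainTab {n : ℕ} {c : ℕ → Word k} (hc : IsZChain k n c) {m : ℕ}
    (hm : m ≤ n) : Tab.shape (chainTab k c m) = c m := by
  induction m with
  | zero => exact hc.1.symm
  | succ m ih => exact shape_updateTab _ (hc.2 m hm) (ih (by omega))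

lemma chainTab_congr {c c' : ℕ → Word k} {n : ℕ} (h : ∀ i ≤ n, c i = c' i) :
    chainTab k c n = chainTab k c' n := by
  induction n with
  | zero => rfl
  | succ n ih =>
    simp only [chainTab, h n (by omega), h (n + 1) le_rfl, ih fun i hi => h i (by omega)]

lemma isPathTab_zero_iff {P : Tab k} : IsPathTab k 0 P ↔ P = [] :=
  ⟨fun ⟨_, _, hP⟩ => hP, fun hP => ⟨fun _ => [], ⟨rfl, by simp⟩, hP⟩⟩

lemma isPathTab_succ_iff {n : ℕ} {P : Tab k} : IsPathTab k (n + 1) P ↔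
    ∃ idx h tp P₀, IsPathTab k n P₀ ∧ ValidPos k idx h tp (Tab.shape P₀) ∧
      P = placeAt idx h tp (n + 1) P₀ := by
  constructor
  · rintro ⟨c, hc, rfl⟩
    have hc' : IsZChain k n c := ⟨hc.1, fun i hi => hc.2 i (by omega)⟩
    have hshape := hc'.shape_chainTab le_rfl
    obtain ⟨idx, h, tp, hv, hw⟩ := zCovers_iff_exists_validPos.1 (hc.2 n (by omega))
    rw [← hshape] at hv hw
    exact ⟨idx, h, tp, _, ⟨c, hc', rfl⟩, hv, by rw [chainTab, hw, ← hshape, updateTab_addAt _ hv]⟩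
  · rintro ⟨idx, h, tp, _, ⟨c, hc, rfl⟩, hv, rfl⟩
    have hshape := hc.shape_chainTab le_rfl
    let c' : ℕ → Word k := fun i => if i ≤ n then c i else addAt idx h tp (c n)
    have hcc' : ∀ i ≤ n, c i = c' i := fun i hi => (if_pos hi).symm
    have hcover : ZCovers k (c' n) (c' (n + 1)) := by
      simp only [c', le_rfl, if_true, Nat.not_succ_le_self, if_false]
      exact zCovers_iff_exists_validPos.2 ⟨idx, h, tp, hshape ▸ hv, rfl⟩
    refine ⟨c', ⟨hc.1, fun i hi => ?_⟩, ?_⟩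
    · rcases Nat.lt_or_ge i n with hin | hin
      · rw [← hcc' i hin.le, ← hcc' (i + 1) hin]
        exact hc.2 i hin
      · obtain rfl : i = n := by omega
        exact hcover
    · simp only [chainTab, ← chainTab_congr hcc', c', le_rfl, if_true, Nat.not_succ_le_self,
        if_false]
      rw [← hshape, updateTab_addAt _ hv]

lemma IsPathTab.entries_perm {n : ℕ} {P : Tab k} (hP : IsPathTab k n P) :
    (Tab.entries P).Perm (List.range' 1 n) := by
  induction n generalizing P with
  | zero => simp [isPathTab_zero_iff.1 hP]
  | succ n ih =>
    obtain ⟨idx, h, tp, P₀, hP₀, hv, rfl⟩ := isPathTab_succ_iff.1 hP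
    exact (entries_placeAt _ hv).trans (((ih hP₀).cons _).trans (perm_range'_succ n))

lemma isStandardTab_iff {n : ℕ} {T : Tab k} :
    IsStandardTab k n T ↔ IsDecreasing k T ∧ (Tab.entries T).Perm (List.range' 1 n) := by
  rw [isDecreasing_iff]
  exact ⟨fun ⟨h1, h2, h3, h4⟩ => ⟨⟨h1, h3, h4⟩, h2⟩, fun ⟨⟨h1, h3, h4⟩, h2⟩ => ⟨h1, h2, h3, h4⟩⟩

lemma IsStandardTab.isDecreasing {n : ℕ} {T : Tab k} (hT : IsStandardTab k n T) :
    IsDecreasing k T :=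
  (isStandardTab_iff.1 hT).1

lemma isStandardTab_zero_iff {T : Tab k} : IsStandardTab k 0 T ↔ T = [] := by
  rw [isStandardTab_iff]
  constructor
  · rintro ⟨-, hperm⟩
    rcases T with _ | ⟨_ | _, T⟩
    · rfl
    all_goals simpa using hperm.length_eq
  · rintro rfl
    exact ⟨trivial, by simp⟩

lemma isStandardTab_succ_iff {n : ℕ} {T : Tab k} : IsStandardTab k (n + 1) T ↔
    ∃ idx h tp T₀, IsStandardTab k n T₀ ∧ ValidPos k idx h tp (Tab.shape T₀) ∧
      T = unevacStep k (n + 1) idx h tp T₀ := by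
  simp only [isStandardTab_iff]
  constructor
  · rintro ⟨hT, hperm⟩
    rcases T with _ | ⟨c, L⟩
    · simpa using hperm.length_eq
    have hmax : c.bottomVal = n + 1 := by
      have hc := List.mem_range'_1.1 (hperm.mem_iff.1 (bottomVal_mem_entries_cons c L))
      have hn := hT.le_bottomVal (n + 1) (hperm.mem_iff.2 (List.mem_range'_1.2 (by omega)))
      omega
    obtain ⟨idx, h, tp, T₀, hv, hT₀, heq⟩ :=
      hT.exists_eq_unevacStep (hperm.nodup_iff.2 List.nodup_range') rfl
    rw [hmax] at heq
    refine ⟨idx, h, tp, T₀, ⟨hT₀, ?_⟩, hv, heq⟩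
    exact ((heq ▸ entries_unevacStep _ hv).symm.trans
      (hperm.trans (perm_range'_succ n).symm)).cons_inv
  · rintro ⟨idx, h, tp, T₀, ⟨hT₀, hperm⟩, hv, rfl⟩
    refine ⟨hT₀.unevacStep (fun x hx => ?_) hv,
      (entries_unevacStep _ hv).trans ((hperm.cons _).trans (perm_range'_succ n))⟩
    have := List.mem_range'_1.1 (hperm.mem_iff.1 hx)
    omega

lemma shape_evac {n : ℕ} {T : Tab k} (hT : IsStandardTab k n T) :
    Tab.shape (evac k T) = Tab.shape T := by
  induction n generalizing T with
  | zero => rw [isStandardTab_zero_iff.1 hT]; rfl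
  | succ n ih =>
    obtain ⟨idx, h, tp, T₀, hT₀, hv, rfl⟩ := isStandardTab_succ_iff.1 hT
    rw [evac_unevacStep _ hT₀.isDecreasing hv, shape_placeAt _ (by rwa [ih hT₀]), ih hT₀,
      shape_unevacStep _ hv]

lemma isPathTab_evac {n : ℕ} {T : Tab k} (hT : IsStandardTab k n T) :
    IsPathTab k n (evac k T) := by
  induction n generalizing T with
  | zero => rw [isStandardTab_zero_iff.1 hT]; exact isPathTab_zero_iff.2 rfl
  | succ n ih =>
    obtain ⟨idx, h, tp, T₀, hT₀, hv, rfl⟩ := isStandardTab_succ_iff.1 hT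
    rw [evac_unevacStep _ hT₀.isDecreasing hv]
    exact isPathTab_succ_iff.2 ⟨idx, h, tp, _, ih hT₀, by rwa [shape_evac hT₀], rfl⟩

lemma removeVal_evac_unevacStep {n idx h : ℕ} {tp : Bool} {T : Tab k}
    (hT : IsStandardTab k n T) (hv : ValidPos k idx h tp (Tab.shape T)) :
    removeVal k (n + 1) (evac k (unevacStep k (n + 1) idx h tp T)) = ((idx, h, tp), evac k T) := by
  have hfresh : n + 1 ∉ Tab.entries (evac k T) := fun hmem => by
    have := List.mem_range'_1.1 ((isPathTab_evac hT).entries_perm.mem_iff.1 hmem)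
    omega
  rw [evac_unevacStep _ hT.isDecreasing hv, removeVal_placeAt (by rwa [shape_evac hT]) hfresh]

lemma evac_injOn (n : ℕ) : Set.InjOn (evac k) {T | IsStandardTab k n T} := by
  induction n with
  | zero =>
    intro T₁ h₁ T₂ h₂ _
    rw [isStandardTab_zero_iff.1 h₁, isStandardTab_zero_iff.1 h₂]
  | succ n ih =>
    intro T₁ h₁ T₂ h₂ heq
    obtain ⟨i₁, g₁, t₁, T₁, hT₁, hv₁, rfl⟩ := isStandardTab_succ_iff.1 h₁
    obtain ⟨i₂, g₂, t₂, T₂, hT₂, hv₂, rfl⟩ := isStandardTab_succ_iff.1 h₂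
    have hrem := congrArg (removeVal k (n + 1)) heq
    rw [removeVal_evac_unevacStep hT₁ hv₁, removeVal_evac_unevacStep hT₂ hv₂] at hrem
    obtain ⟨⟨rfl, rfl, rfl⟩, hev⟩ := by simpa using hrem
    rw [ih hT₁ hT₂ hev]

lemma evac_surjOn (n : ℕ) :
    Set.SurjOn (evac k) {T | IsStandardTab k n T} {P | IsPathTab k n P} := by
  induction n with
  | zero => exact fun P hP => ⟨[], isStandardTab_zero_iff.2 rfl, (isPathTab_zero_iff.1 hP).symm⟩
  | succ n ih =>
    intro P hP
    obtain ⟨idx, h, tp, _, hP₀, hv, rfl⟩ := isPathTab_succ_iff.1 hP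
    obtain ⟨T₀, hT₀, rfl⟩ := ih hP₀
    rw [shape_evac hT₀] at hv
    exact ⟨_, isStandardTab_succ_iff.2 ⟨idx, h, tp, T₀, hT₀, hv, rfl⟩,
      evac_unevacStep _ hT₀.isDecreasing hv⟩

end KRF

namespace KRF

theorem evac_bijOn_general (k n : ℕ) :
    Set.BijOn (evac k) {T : Tab k | IsStandardTab k n T} {T : Tab k | IsPathTab k n T} ∧
    ∀ T : Tab k, IsStandardTab k n T → Tab.shape (evac k T) = Tab.shape T :=
  ⟨⟨fun _ hT => isPathTab_evac hT, evac_injOn n, evac_surjOn n⟩, fun _ hT => shape_evac hT⟩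

/-- For each `k ≥ 1` and `n ≥ 0`, the evacuation map `ev` is a
bijection from the set of standard `k`-ribbon Fibonacci tableaux with entries `1, …, n`
onto the set of `k`-ribbon Fibonacci path tableaux with entries `1, …, n`; moreover
`ev(P)` has the same `k`-ribbon Fibonacci shape as `P`. -/
theorem evac_bijOn (k n : ℕ) (hk : 1 ≤ k) :
    Set.BijOn (evac k) {T : Tab k | IsStandardTab k n T} {T : Tab k | IsPathTab k n T} ∧
    ∀ T : Tab k, IsStandardTab k n T → Tab.shape (evac k T) = Tab.shape T :=
  evac_bijOn_general k n

end KRF
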